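/- arXiv:2305.19566 — 3 statements merged into one kernel-verified Lean document; each statement's English description precedes it below -/
import Mathlib

section
/- Let a ≥ 7 be an integer and ρ the largest real root of x^3 - a x^2 - (a+3)x - 1. For integers v, w with 0 ≤ v ≤ a and v(a+2) + 1 ≤ w ≤ (v+1)(a+1), the algebraic number -v - wρ + (v+1)ρ^2 is totally positive, i.e., σ(-v - wρ + (v+1)ρ^2) > 0 for every real embedding σ of Q(ρ). -/
/-!
The roots of `x³ - a x² - (a+3) x - 1` are `ρ`, `-1/(1+ρ)` and `-(1+ρ)/ρ`, so a real embedding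
sends `ρ` to one of these, and it suffices to check that `-v - w x + (v+1) x²` is positive at each.
At `x = ρ` this follows from `w ≤ (v+1)(a+1)` and `ρ (1+ρ) (ρ - a - 1) = 2ρ + 1`; at `-1/(1+ρ)`,
after clearing denominators, from `v(a+2) + 1 ≤ w` and `v ≤ a < ρ`; and at `-(1+ρ)/ρ ≤ -1` every
term is harmless.
-/

open IntermediateField

def shanksCubic {R : Type*} [Ring R] (a x : R) : R := x ^ 3 - a * x ^ 2 - (a + 3) * x - 1

theorem map_shanksCubic {R S : Type*} [Ring R] [Ring S] (σ : R →+* S) (a x : R) :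
    σ (shanksCubic a x) = shanksCubic (σ a) (σ x) := by
  simp only [shanksCubic, map_sub, map_mul, map_pow, map_add, map_ofNat, map_one]

section Real

variable {a ρ r v w : ℝ}

theorem shanksCubic_roots (hρ : shanksCubic a ρ = 0) (hr : shanksCubic a r = 0) :
    r = ρ ∨ r * (1 + ρ) = -1 ∨ ρ * r = -(1 + ρ) := by
  unfold shanksCubic at hρ hr
  have hfactor : (r - ρ) * ((1 + ρ) * r + 1) * (ρ * r + (1 + ρ)) = 0 := by
    linear_combination (ρ * (1 + ρ)) * hr - (r ^ 2 + r) * hρ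
  rcases mul_eq_zero.mp hfactor with h | h
  · rcases mul_eq_zero.mp h with h | h
    · exact .inl (sub_eq_zero.mp h)
    · exact .inr (.inl (by linarith))
  · exact .inr (.inr (by linarith))

theorem add_one_lt_of_shanksCubic_largest_root (ha : 0 ≤ a)
    (hmax : ∀ x, shanksCubic a x = 0 → x ≤ ρ) : a + 1 < ρ := by
  have hsign : shanksCubic a (a + 1) < 0 ∧ 0 < shanksCubic a (a + 2) := by
    unfold shanksCubic; constructor <;> nlinarith
  obtain ⟨c, ⟨hc₁, hc₂⟩, hc⟩ := intermediate_value_Ioo (by linarith : a + 1 ≤ a + 2)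
    (by unfold shanksCubic; fun_prop) (⟨hsign.1, hsign.2⟩ : (0 : ℝ) ∈ Set.Ioo _ _)
  exact hc₁.trans_le (hmax c hc)

theorem shanks_pos_at_self (hρ₀ : 0 < ρ) (hρ : shanksCubic a ρ = 0) (hv : 0 ≤ v)
    (hw : w ≤ (v + 1) * (a + 1)) : 0 < -v - w * ρ + (v + 1) * ρ ^ 2 := by
  unfold shanksCubic at hρ
  -- `ρ (ρ - a - 1) = (2ρ + 1)/(1 + ρ) > 1`
  have hgap : ((v + 1) * ρ ^ 2 - (v + 1) * (a + 1) * ρ - v) * (1 + ρ) = (v + 2) * ρ + 1 := by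
    linear_combination (v + 1) * hρ
  have hpos : 0 < (v + 1) * ρ ^ 2 - (v + 1) * (a + 1) * ρ - v := by
    nlinarith
  nlinarith [mul_le_mul_of_nonneg_right hw hρ₀.le]

theorem shanks_pos_at_neg_inv_one_add (hρ : shanksCubic a ρ = 0) (hv : 0 ≤ v) (hvρ : v < ρ)
    (hw : v * (a + 2) + 1 ≤ w) (hr : r * (1 + ρ) = -1) : 0 < -v - w * r + (v + 1) * r ^ 2 := by
  unfold shanksCubic at hρ
  have hρ₁ : 0 < 1 + ρ := by linarith
  have hcleared : (-v - w * r + (v + 1) * r ^ 2) * (1 + ρ) ^ 2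
      = -v * (1 + ρ) ^ 2 + w * (1 + ρ) + (v + 1) := by
    linear_combination (-(w * (1 + ρ)) + (v + 1) * (r * (1 + ρ) - 1)) * hr
  have hbound : (-v * (1 + ρ) ^ 2 + (v * (a + 2) + 1) * (1 + ρ) + (v + 1)) * ρ
      = (1 + ρ) * (ρ - v) + ρ := by
    linear_combination (-v) * hρ
  have hlow : 0 < -v * (1 + ρ) ^ 2 + (v * (a + 2) + 1) * (1 + ρ) + (v + 1) := by
    nlinarith [mul_pos hρ₁ (sub_pos.mpr hvρ)]
  have hnum : 0 < -v * (1 + ρ) ^ 2 + w * (1 + ρ) + (v + 1) := by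
    nlinarith [mul_le_mul_of_nonneg_right hw hρ₁.le]
  exact pos_of_mul_pos_left (hcleared ▸ hnum) (by positivity)

theorem shanks_pos_of_le_neg_one (hv : 0 ≤ v) (hw : 0 ≤ w) (hr : r ≤ -1) :
    0 < -v - w * r + (v + 1) * r ^ 2 := by
  nlinarith [mul_le_mul_of_nonneg_left hr hw, mul_nonneg hv (by nlinarith : (0 : ℝ) ≤ r ^ 2 - 1)]

theorem shanks_pos_at_root (ha : 0 ≤ a) (hρ : shanksCubic a ρ = 0)
    (hmax : ∀ x, shanksCubic a x = 0 → x ≤ ρ) (hv : 0 ≤ v) (hva : v ≤ a)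
    (hw₁ : v * (a + 2) + 1 ≤ w) (hw₂ : w ≤ (v + 1) * (a + 1)) (hr : shanksCubic a r = 0) :
    0 < -v - w * r + (v + 1) * r ^ 2 := by
  have hρa := add_one_lt_of_shanksCubic_largest_root ha hmax
  rcases shanksCubic_roots hρ hr with rfl | hr | hr
  · exact shanks_pos_at_self (by linarith) hρ hv hw₂
  · exact shanks_pos_at_neg_inv_one_add hρ hv (by linarith) hw₁ hr
  · exact shanks_pos_of_le_neg_one hv (by nlinarith) (by nlinarith)

end Real

theorem shanks_indecomposables_totally_positive
    (a : ℤ) (ha : 7 ≤ a) (ρ : ℝ)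
    (hroot : ρ^3 - (a:ℝ)*ρ^2 - ((a:ℝ)+3)*ρ - 1 = 0)
    (hmax : ∀ x : ℝ, x^3 - (a:ℝ)*x^2 - ((a:ℝ)+3)*x - 1 = 0 → x ≤ ρ)
    (v w : ℤ) (hv : 0 ≤ v) (hva : v ≤ a)
    (hw1 : v*(a+2)+1 ≤ w) (hw2 : w ≤ (v+1)*(a+1)) :
    ∀ σ : ℚ⟮ρ⟯ →+* ℝ,
      σ (-(v : ℚ⟮ρ⟯) - (w : ℚ⟮ρ⟯) * ⟨ρ, mem_adjoin_simple_self ℚ ρ⟩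
          + ((v : ℚ⟮ρ⟯)+1) * ⟨ρ, mem_adjoin_simple_self ℚ ρ⟩^2) > 0 := by
  intro σ
  set ρ' : ℚ⟮ρ⟯ := ⟨ρ, mem_adjoin_simple_self ℚ ρ⟩
  have hρ' : shanksCubic (a : ℚ⟮ρ⟯) ρ' = 0 :=
    Subtype.ext (by push_cast [shanksCubic]; exact hroot)
  have hσρ : shanksCubic (a : ℝ) (σ ρ') = 0 := by
    simpa only [map_shanksCubic, map_intCast, map_zero] using congrArg σ hρ'
  simp only [map_add, map_sub, map_neg, map_mul, map_pow, map_intCast, map_one]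
  exact shanks_pos_at_root (by norm_cast; omega) hroot hmax (by exact_mod_cast hv)
    (by exact_mod_cast hva) (by exact_mod_cast hw1) (by exact_mod_cast hw2) hσρ
end

section
/- Let a ≥ 7 be an integer and ρ the smallest real root of x^3 + (a-1)x^2 - a x - 1. For every integer w with 1 ≤ w ≤ a - 1, the element 1 + wρ + ρ^2 is totally positive in Q(ρ). -/
/-! The cubic factors as `x^3 + (a-1)x^2 - ax - 1 = x^2 (x + a - 1) - (ax + 1)`, so it is positive on
`(1 - a, -1/a]` and every real root lies either in `(-∞, 1 - a]` or in `(-1/a, ∞)`. On the first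
interval `x (x + w) ≥ 0` because `x ≤ 1 - a ≤ -w`; on the second `1 + w x > 1 - w/a > 0`. Since every
real embedding of `ℚ(ρ)` sends `ρ` to a real root of the cubic, `1 + wρ + ρ²` is totally positive. -/

open IntermediateField

def ennolaCubic {R : Type*} [CommRing R] (a : ℤ) (x : R) : R :=
  x ^ 3 + ((a : R) - 1) * x ^ 2 - a * x - 1

theorem map_ennolaCubic {R S : Type*} [CommRing R] [CommRing S] (f : R →+* S) (a : ℤ) (x : R) :
    f (ennolaCubic a x) = ennolaCubic a (f x) := by
  simp [ennolaCubic]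

theorem le_one_sub_or_mul_add_one_pos_of_ennolaCubic_eq_zero {a : ℤ} {x : ℝ}
    (hx : ennolaCubic a x = 0) : x ≤ 1 - a ∨ 0 < a * x + 1 := by
  by_contra! h
  obtain ⟨hleft, hright⟩ := h
  have hx0 : x ≠ 0 := by
    rintro rfl
    norm_num at hright
  have hfactor : x ^ 2 * (x + a - 1) = a * x + 1 := by
    unfold ennolaCubic at hx
    linear_combination hx
  have : 0 < x ^ 2 * (x + a - 1) := mul_pos (by positivity) (by linarith)
  linarith

theorem one_add_mul_add_sq_pos {a w x : ℝ} (ha : 0 < a) (hw0 : 0 ≤ w) (hwa : w ≤ a - 1)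
    (hx : x ≤ 1 - a ∨ 0 < a * x + 1) : 0 < 1 + w * x + x ^ 2 := by
  rcases hx with hx | hx
  · have : 0 ≤ x * (x + w) := mul_nonneg_of_nonpos_of_nonpos (by linarith) (by linarith)
    nlinarith
  · have : 0 < a * (1 + w * x) := by nlinarith
    nlinarith [pos_of_mul_pos_right this ha.le, sq_nonneg x]

theorem ennola_indecomposables_totally_positive_general
    (a : ℤ) (ha : 7 ≤ a) (ρ : ℝ)
    (hroot : ρ^3 + ((a:ℝ)-1)*ρ^2 - (a:ℝ)*ρ - 1 = 0)
    (w : ℤ) (hw1 : 1 ≤ w) (hw2 : w ≤ a - 1) :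
    ∀ σ : ℚ⟮ρ⟯ →+* ℝ,
      σ (1 + (w : ℚ⟮ρ⟯) * ⟨ρ, mem_adjoin_simple_self ℚ ρ⟩
          + ⟨ρ, mem_adjoin_simple_self ℚ ρ⟩^2) > 0 := by
  intro σ
  set ρK : ℚ⟮ρ⟯ := ⟨ρ, mem_adjoin_simple_self ℚ ρ⟩
  have hρK : ennolaCubic a ρK = 0 := Subtype.ext (by simpa [ennolaCubic, ρK] using hroot)
  have hσρ : ennolaCubic a (σ ρK) = 0 := by rw [← map_ennolaCubic, hρK, map_zero]
  have hpos := one_add_mul_add_sq_pos (w := w) (by exact_mod_cast (by omega : (0 : ℤ) < a))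
    (by exact_mod_cast (by omega : (0 : ℤ) ≤ w)) (by exact_mod_cast hw2)
    (le_one_sub_or_mul_add_one_pos_of_ennolaCubic_eq_zero hσρ)
  simpa using hpos

theorem ennola_indecomposables_totally_positive
    (a : ℤ) (ha : 7 ≤ a) (ρ : ℝ)
    (hroot : ρ^3 + ((a:ℝ)-1)*ρ^2 - (a:ℝ)*ρ - 1 = 0)
    (hmin : ∀ x : ℝ, x^3 + ((a:ℝ)-1)*x^2 - (a:ℝ)*x - 1 = 0 → ρ ≤ x)
    (w : ℤ) (hw1 : 1 ≤ w) (hw2 : w ≤ a - 1) :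
    ∀ σ : ℚ⟮ρ⟯ →+* ℝ,
      σ (1 + (w : ℚ⟮ρ⟯) * ⟨ρ, mem_adjoin_simple_self ℚ ρ⟩
          + ⟨ρ, mem_adjoin_simple_self ℚ ρ⟩^2) > 0 :=
  ennola_indecomposables_totally_positive_general a ha ρ hroot w hw1 hw2
end

section
/- Let a ≥ 7 be an integer and ρ the smallest real root of x^3 - (2a+2)x^2 + a(a+2)x - 1. For every integer w with a ≤ w ≤ 2a - 1, the element -1 + ((a+2)w + 1)ρ - wρ^2 is totally positive in Q(ρ). -/
/-!
Every real embedding sends `ρ` to a real root `r` of the cubic, which rewrites as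
`r (a - r) (a + 2 - r) = 1`, so the roots lie in `(0, a)` or beyond `a + 2`. Writing the element
as `w · r (a + 2 - r) + (r - 1)`, the first summand is `w / (a - r)` for the small roots, and the
sum is positive because `w ≥ a > (1 - r)(a - r)`; for the root beyond `a + 2` it is `-w / (r - a)`, which
`r - 1 > a + 1` beats because `w < 2a + 2 < (r - 1)(r - a)`.
-/

open IntermediateField

section CubicRoots

variable {a w r : ℝ}

lemma pos_lt_or_gt_of_mul_sub_mul_sub_eq_one (ha : 0 ≤ a) (h : r * (a - r) * (a + 2 - r) = 1) :
    (0 < r ∧ r < a) ∨ a + 2 < r := by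
  rcases lt_trichotomy r a with hra | rfl | hra
  · refine Or.inl ⟨?_, hra⟩
    by_contra! hr
    nlinarith [mul_nonneg (mul_nonneg (neg_nonneg.2 hr) (sub_nonneg.2 hra.le))
      (by linarith : (0:ℝ) ≤ a + 2 - r)]
  · simp at h
  · refine Or.inr ?_
    by_contra! hr
    nlinarith [mul_nonneg (mul_nonneg (by linarith : (0:ℝ) ≤ r) (sub_nonneg.2 hra.le))
      (sub_nonneg.2 hr)]

lemma sub_one_add_mul_pos_of_lt (hw : a ≤ w) (hr0 : 0 < r) (hra : r < a)
    (h : r * (a - r) * (a + 2 - r) = 1) :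
    0 < w * (r * (a + 2 - r)) + (r - 1) := by
  have har : 0 < a - r := by linarith
  have hinv : r * (a + 2 - r) = 1 / (a - r) := by
    field_simp
    linarith
  have hnum : 0 < w + (r - 1) * (a - r) := by nlinarith
  calc 0 < (w + (r - 1) * (a - r)) / (a - r) := by positivity
    _ = w * (r * (a + 2 - r)) + (r - 1) := by
      rw [hinv]
      field_simp

lemma sub_one_add_mul_pos_of_gt (ha : 0 ≤ a) (hw : w < 2 * a + 2) (hra : a + 2 < r)
    (h : r * (a - r) * (a + 2 - r) = 1) :
    0 < w * (r * (a + 2 - r)) + (r - 1) := by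
  have hra' : 0 < r - a := by linarith
  have hinv : r * (a + 2 - r) = -(1 / (r - a)) := by
    field_simp
    linarith
  have hbig : w < (r - 1) * (r - a) := by
    nlinarith [mul_pos (by linarith : (0:ℝ) < r - (a + 2)) (by linarith : (0:ℝ) < r - 1)]
  have hquot : w / (r - a) < r - 1 := by
    rwa [div_lt_iff₀ hra']
  calc 0 < (r - 1) - w / (r - a) := by linarith
    _ = w * (r * (a + 2 - r)) + (r - 1) := by
      rw [hinv]
      ring

lemma quadratic_pos_of_cubic (ha : 0 ≤ a) (hw1 : a ≤ w) (hw2 : w < 2 * a + 2)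
    (hr : r^3 - (2*a+2)*r^2 + a*(a+2)*r - 1 = 0) :
    0 < -1 + ((a+2)*w+1)*r - w*r^2 := by
  have h : r * (a - r) * (a + 2 - r) = 1 := by linarith
  have hsplit : -1 + ((a+2)*w+1)*r - w*r^2 = w * (r * (a + 2 - r)) + (r - 1) := by ring
  rw [hsplit]
  rcases pos_lt_or_gt_of_mul_sub_mul_sub_eq_one ha h with ⟨hr0, hra⟩ | hra
  · exact sub_one_add_mul_pos_of_lt hw1 hr0 hra h
  · exact sub_one_add_mul_pos_of_gt ha hw2 hra h

end CubicRoots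

theorem third_family_indecomposables_totally_positive_general
    (a : ℤ) (ha : 7 ≤ a) (ρ : ℝ)
    (hroot : ρ^3 - (2*(a:ℝ)+2)*ρ^2 + (a:ℝ)*((a:ℝ)+2)*ρ - 1 = 0)
    (w : ℤ) (hw1 : a ≤ w) (hw2 : w ≤ 2*a - 1) :
    ∀ σ : ℚ⟮ρ⟯ →+* ℝ,
      σ (-1 + (((a : ℚ⟮ρ⟯)+2) * (w : ℚ⟮ρ⟯) + 1) * ⟨ρ, mem_adjoin_simple_self ℚ ρ⟩
          - (w : ℚ⟮ρ⟯) * ⟨ρ, mem_adjoin_simple_self ℚ ρ⟩^2) > 0 := by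
  intro σ
  set x : ℚ⟮ρ⟯ := ⟨ρ, mem_adjoin_simple_self ℚ ρ⟩
  have hx : x^3 - (2*(a:ℚ⟮ρ⟯)+2)*x^2 + (a:ℚ⟮ρ⟯)*((a:ℚ⟮ρ⟯)+2)*x - 1 = 0 :=
    Subtype.ext (by push_cast; exact hroot)
  have hσx : (σ x)^3 - (2*(a:ℝ)+2)*(σ x)^2 + (a:ℝ)*((a:ℝ)+2)*(σ x) - 1 = 0 := by
    simpa [map_ofNat] using congrArg σ hx
  have ha' : (0:ℝ) ≤ a := by exact_mod_cast (by omega : 0 ≤ a)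
  have hw1' : (a:ℝ) ≤ w := by exact_mod_cast hw1
  have hw2' : (w:ℝ) < 2 * a + 2 := by exact_mod_cast (by omega : w < 2 * a + 2)
  simpa [map_ofNat] using quadratic_pos_of_cubic ha' hw1' hw2' hσx

theorem third_family_indecomposables_totally_positive
    (a : ℤ) (ha : 7 ≤ a) (ρ : ℝ)
    (hroot : ρ^3 - (2*(a:ℝ)+2)*ρ^2 + (a:ℝ)*((a:ℝ)+2)*ρ - 1 = 0)
    (hmin : ∀ x : ℝ, x^3 - (2*(a:ℝ)+2)*x^2 + (a:ℝ)*((a:ℝ)+2)*x - 1 = 0 → ρ ≤ x)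
    (w : ℤ) (hw1 : a ≤ w) (hw2 : w ≤ 2*a - 1) :
    ∀ σ : ℚ⟮ρ⟯ →+* ℝ,
      σ (-1 + (((a : ℚ⟮ρ⟯)+2) * (w : ℚ⟮ρ⟯) + 1) * ⟨ρ, mem_adjoin_simple_self ℚ ρ⟩
          - (w : ℚ⟮ρ⟯) * ⟨ρ, mem_adjoin_simple_self ℚ ρ⟩^2) > 0 :=
  third_family_indecomposables_totally_positive_general a ha ρ hroot w hw1 hw2
end
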